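/- Let H = (V, E) be a linear hypergraph with at most n edges, each with at most n vertices, where n is a perfect square, and suppose every vertex has degree at least √n. Suppose there exists a vertex v with d(v) = √n such that |adj(u)| = n for all u in adj(v) ∪ {v}. Then H admits a proper coloring with √n + 1 colors, and hence with n colors. -/

import Mathlib

open scoped Classical

/-- A finite hypergraph is given by its finite set of edges, each a finite set of vertices.
`Linear E` means any two distinct edges share at most one vertex. -/
def HG.Linear {V : Type*} (E : Finset (Finset V)) : Prop :=
  ∀ e₁ ∈ E, ∀ e₂ ∈ E, e₁ ≠ e₂ → (e₁ ∩ e₂).card ≤ 1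

/-- The degree of a vertex: the number of edges containing it. -/
noncomputable def HG.deg {V : Type*} (E : Finset (Finset V)) (v : V) : ℕ :=
  (E.filter (fun e => v ∈ e)).card

/-- The vertex set of the hypergraph: the union of its edges. -/
noncomputable def HG.verts {V : Type*} (E : Finset (Finset V)) : Finset V := E.sup id

/-- The adjacency of a vertex `v`: vertices distinct from `v` sharing an edge with `v`. -/
noncomputable def HG.adj {V : Type*} (E : Finset (Finset V)) (v : V) : Finset V :=
  (HG.verts E).filter (fun u => u ≠ v ∧ ∃ e ∈ E, v ∈ e ∧ u ∈ e)

/-- A proper coloring: vertices lying in a common edge receive distinct colors. -/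
def HG.Proper {V : Type*} {m : ℕ} (E : Finset (Finset V)) (f : V → Fin m) : Prop :=
  ∀ e ∈ E, ∀ u ∈ e, ∀ w ∈ e, u ≠ w → f u ≠ f w

/-!
Around `v` the hypotheses are tight: an edge through `v` has `k + 1` vertices, each of degree at
least `k`, and by linearity the `∑ (deg y - 1) ≥ (k + 1)(k - 1) = k² - 1` other edges through its
vertices are distinct, so they are all the other edges. Propagating this tightness shows that every
edge has `k + 1` vertices, every vertex has degree `k` and any two edges meet. Then two
non-adjacent vertices `u`, `w` have the same neighbourhood: for an edge `g` through `u`, the `k`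
edges through `w` meet `g` in `k` distinct vertices other than `u`, i.e. in all of `g \ {u}`.
And every vertex is non-adjacent to some vertex of a fixed edge `e`, since only `k` edges pass
through it. Colouring each vertex by such a vertex of `e` is therefore proper.
-/

namespace HG

open Finset

variable {V : Type*} {E : Finset (Finset V)} {k : ℕ} {u v w : V} {e f g : Finset V}

lemma mem_verts : u ∈ verts E ↔ ∃ e ∈ E, u ∈ e := by
  simp [verts, mem_sup]

lemma mem_verts_of_mem (he : e ∈ E) (hu : u ∈ e) : u ∈ verts E :=
  mem_verts.2 ⟨e, he, hu⟩

lemma mem_adj : u ∈ adj E w ↔ u ≠ w ∧ ∃ e ∈ E, w ∈ e ∧ u ∈ e := by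
  simp only [adj, mem_filter, and_iff_right_iff_imp]
  rintro ⟨-, e, he, -, hu⟩
  exact mem_verts_of_mem he hu

lemma mem_adj_comm : u ∈ adj E w ↔ w ∈ adj E u := by
  simp only [mem_adj]
  exact ⟨fun ⟨h, e, he, hw, hu⟩ => ⟨h.symm, e, he, hu, hw⟩,
    fun ⟨h, e, he, hw, hu⟩ => ⟨h.symm, e, he, hu, hw⟩⟩

lemma notMem_adj_self : u ∉ adj E u := by
  simp [mem_adj]

lemma adj_eq_biUnion (u : V) : adj E u = {f ∈ E | u ∈ f}.biUnion (·.erase u) := by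
  ext x
  simp only [mem_adj, mem_biUnion, mem_filter, mem_erase]
  exact ⟨fun ⟨hxu, f, hf, hu, hx⟩ => ⟨f, ⟨hf, hu⟩, hxu, hx⟩,
    fun ⟨f, ⟨hf, hu⟩, hxu, hx⟩ => ⟨hxu, f, hf, hu, hx⟩⟩

lemma sum_deg_eq_sum_card_inter (e : Finset V) : ∑ y ∈ e, deg E y = ∑ f ∈ E, #(e ∩ f) := by
  simp only [deg, ← filter_mem_eq_inter, card_filter]
  exact Finset.sum_comm

lemma Proper.comp {m n : ℕ} {c : V → Fin m} (hc : Proper E c) {φ : Fin m → Fin n}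
    (hφ : Function.Injective φ) : Proper E (φ ∘ c) :=
  fun e he x hx y hy hxy h => hc e he x hx y hy hxy (hφ h)

namespace Linear

variable (hlin : Linear E)
include hlin

lemma eq_of_mem_of_mem (he : e ∈ E) (hf : f ∈ E) {x y : V} (hxe : x ∈ e) (hxf : x ∈ f)
    (hye : y ∈ e) (hyf : y ∈ f) (hxy : x ≠ y) : e = f := by
  by_contra hef
  have := card_le_card (insert_subset (mem_inter.2 ⟨hxe, hxf⟩)
    (singleton_subset_iff.2 (mem_inter.2 ⟨hye, hyf⟩)))
  rw [card_pair hxy] at this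
  have := hlin e he f hf hef
  omega

lemma sum_deg_add_card_disjoint_le (he : e ∈ E) :
    ∑ y ∈ e, deg E y + #{f ∈ E.erase e | Disjoint e f} + 1 ≤ #e + #E := by
  have hle : ∑ f ∈ E.erase e, (#(e ∩ f) + if Disjoint e f then 1 else 0) ≤
      ∑ _f ∈ E.erase e, 1 := by
    refine sum_le_sum fun f hf => ?_
    split_ifs with hef
    · simp [disjoint_iff_inter_eq_empty.1 hef]
    · simpa using hlin e he f (mem_of_mem_erase hf) (ne_of_mem_erase hf).symm
  rw [sum_add_distrib, ← card_filter, sum_const, smul_eq_mul, mul_one,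
    card_erase_of_mem he] at hle
  rw [sum_deg_eq_sum_card_inter, ← add_sum_erase E _ he, inter_self]
  have := card_pos.2 ⟨e, he⟩
  omega

lemma card_le_of_two_le (hk : 2 ≤ k) (hE : #E ≤ k ^ 2) (hdeg : ∀ y ∈ e, k ≤ deg E y)
    (he : e ∈ E) : #e ≤ k + 1 := by
  have := hlin.sum_deg_add_card_disjoint_le he
  have := card_nsmul_le_sum e _ k hdeg
  rw [smul_eq_mul] at this
  nlinarith

lemma deg_eq_of_card_eq (hE : #E ≤ k ^ 2) (hdeg : ∀ y ∈ e, k ≤ deg E y) (he : e ∈ E)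
    (hcard : #e = k + 1) : ∀ y ∈ e, deg E y = k := by
  have hsum : ∑ y ∈ e, deg E y ≤ ∑ _y ∈ e, k := by
    have := hlin.sum_deg_add_card_disjoint_le he
    rw [sum_const, smul_eq_mul, hcard]
    nlinarith
  exact fun y hy => ((sum_eq_sum_iff_of_le hdeg).1 ((sum_le_sum hdeg).antisymm hsum) y hy).symm

lemma inter_nonempty_of_card_eq (hE : #E ≤ k ^ 2) (hdeg : ∀ y ∈ e, k ≤ deg E y) (he : e ∈ E)
    (hcard : #e = k + 1) (hf : f ∈ E) : (e ∩ f).Nonempty := by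
  obtain rfl | hfe := eq_or_ne f e
  · simp [← card_pos, hcard]
  have hdisj : #{f ∈ E.erase e | Disjoint e f} = 0 := by
    have := hlin.sum_deg_add_card_disjoint_le he
    have := card_nsmul_le_sum e _ k hdeg
    rw [smul_eq_mul, hcard] at this
    nlinarith
  rw [card_eq_zero, filter_eq_empty_iff] at hdisj
  exact not_disjoint_iff_nonempty_inter.1 (hdisj (mem_erase.2 ⟨hfe, hf⟩))

lemma card_adj (u : V) : #(adj E u) = ∑ f ∈ E with u ∈ f, (#f - 1) := by
  rw [adj_eq_biUnion, card_biUnion]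
  · exact sum_congr rfl fun f hf => card_erase_of_mem (mem_filter.1 hf).2
  · intro f hf g hg hfg
    simp only [coe_filter, Set.mem_ofPred_eq] at hf hg
    refine disjoint_left.2 fun x hxf hxg => hfg ?_
    exact hlin.eq_of_mem_of_mem hf.1 hg.1 (mem_of_mem_erase hxf) (mem_of_mem_erase hxg) hf.2 hg.2
      (ne_of_mem_erase hxf)

lemma card_eq_of_card_adj (hsize : ∀ f ∈ E, #f ≤ k + 1) (hdeg : deg E u = k)
    (hadj : #(adj E u) = k ^ 2) (hf : f ∈ E) (hu : u ∈ f) : #f = k + 1 := by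
  have hle : ∀ g ∈ E.filter (u ∈ ·), #g - 1 ≤ k := fun g hg => by
    have := hsize g (mem_filter.1 hg).1
    omega
  have hsum : ∑ _g ∈ E.filter (u ∈ ·), k = ∑ g ∈ E.filter (u ∈ ·), (#g - 1) := by
    rw [← hlin.card_adj, hadj, sum_const, smul_eq_mul, ← deg, hdeg, sq]
  have := (sum_eq_sum_iff_of_le hle).1 hsum.symm f (mem_filter.2 ⟨hf, hu⟩)
  have := card_pos.2 ⟨u, hu⟩
  omega

end Linear

/-- For `k ≥ 2` these are exactly the duals of the affine planes of order `k`. -/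
structure IsDualAffinePlane (E : Finset (Finset V)) (k : ℕ) : Prop where
  linear : Linear E
  card_eq : ∀ e ∈ E, #e = k + 1
  deg_eq : ∀ u ∈ verts E, deg E u = k
  inter_nonempty : ∀ e ∈ E, ∀ f ∈ E, (e ∩ f).Nonempty

theorem Linear.isDualAffinePlane (hlin : Linear E) (hk : 2 ≤ k) (hE : #E ≤ k ^ 2)
    (hdeg : ∀ u ∈ verts E, k ≤ deg E u) (hdv : deg E v = k) (hadjv : #(adj E v) = k ^ 2)
    (hadj : ∀ u ∈ adj E v, #(adj E u) = k ^ 2) : IsDualAffinePlane E k := by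
  have hdeg' : ∀ e ∈ E, ∀ y ∈ e, k ≤ deg E y := fun e he y hy => hdeg y (mem_verts_of_mem he hy)
  have hsize : ∀ e ∈ E, #e ≤ k + 1 := fun e he => hlin.card_le_of_two_le hk hE (hdeg' e he) he
  have hv : ∀ e ∈ E, v ∈ e → #e = k + 1 := fun e he hve =>
    hlin.card_eq_of_card_adj hsize hdv hadjv he hve
  have hnbr : ∀ u ∈ adj E v, deg E u = k := fun u hu => by
    obtain ⟨-, e, he, hve, hue⟩ := mem_adj.1 hu
    exact hlin.deg_eq_of_card_eq hE (hdeg' e he) he (hv e he hve) u hue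
  obtain ⟨e₀, he₀, hve₀⟩ : ∃ e ∈ E, v ∈ e := by
    obtain ⟨e, he⟩ := card_pos.1 (show 0 < deg E v by omega)
    exact ⟨e, (mem_filter.1 he).1, (mem_filter.1 he).2⟩
  -- every edge meets `e₀`, hence passes through `v` or through a neighbour of `v`
  have hcard : ∀ f ∈ E, #f = k + 1 := fun f hf => by
    obtain ⟨y, hy⟩ := hlin.inter_nonempty_of_card_eq hE (hdeg' e₀ he₀) he₀ (hv e₀ he₀ hve₀) hf
    obtain ⟨hye₀, hyf⟩ := mem_inter.1 hy
    obtain rfl | hyv := eq_or_ne y v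
    · exact hv f hf hyf
    have hy : y ∈ adj E v := mem_adj.2 ⟨hyv, e₀, he₀, hve₀, hye₀⟩
    exact hlin.card_eq_of_card_adj hsize (hnbr y hy) (hadj y hy) hf hyf
  refine ⟨hlin, hcard, fun u hu => ?_, fun e he f hf =>
    hlin.inter_nonempty_of_card_eq hE (hdeg' e he) he (hcard e he) hf⟩
  obtain ⟨e, he, hue⟩ := mem_verts.1 hu
  exact hlin.deg_eq_of_card_eq hE (hdeg' e he) he (hcard e he) u hue

namespace IsDualAffinePlane

variable (hA : IsDualAffinePlane E k)
include hA

lemma erase_subset_adj (hw : w ∈ verts E) (hwu : w ∉ adj E u) (hg : g ∈ E) (hug : u ∈ g) :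
    g.erase u ⊆ adj E w := by
  obtain rfl | hne := eq_or_ne w u
  · exact fun x hx => mem_adj.2 ⟨ne_of_mem_erase hx, g, hg, hug, mem_of_mem_erase hx⟩
  have hwg : w ∉ g := fun h => hwu (mem_adj.2 ⟨hne, g, hg, hug, h⟩)
  have hle : #{f ∈ E | w ∈ f} ≤ #{x ∈ g.erase u | x ∈ adj E w} := by
    refine card_le_card_of_forall_subsingleton (fun f y => y ∈ f) (fun f hf => ?_) ?_
    · obtain ⟨hf, hwf⟩ := mem_filter.1 hf
      obtain ⟨y, hy⟩ := hA.inter_nonempty g hg f hf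
      obtain ⟨hyg, hyf⟩ := mem_inter.1 hy
      have hyu : y ≠ u := by
        rintro rfl
        exact hwu (mem_adj.2 ⟨hne, f, hf, hyf, hwf⟩)
      have hyw : y ≠ w := by
        rintro rfl
        exact hwg hyg
      exact ⟨y, mem_filter.2 ⟨mem_erase.2 ⟨hyu, hyg⟩, mem_adj.2 ⟨hyw, f, hf, hwf, hyf⟩⟩, hyf⟩
    · rintro y hy f₁ ⟨hf₁, hyf₁⟩ f₂ ⟨hf₂, hyf₂⟩
      obtain ⟨hf₁, hwf₁⟩ := mem_filter.1 hf₁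
      obtain ⟨hf₂, hwf₂⟩ := mem_filter.1 hf₂
      exact hA.linear.eq_of_mem_of_mem hf₁ hf₂ hwf₁ hwf₂ hyf₁ hyf₂
        (mem_adj.1 (mem_filter.1 hy).2).1.symm
  have hk : #(g.erase u) ≤ #{f ∈ E | w ∈ f} := by
    rw [card_erase_of_mem hug, hA.card_eq g hg, ← deg, hA.deg_eq w hw]
    simp
  exact filter_eq_self.1 (eq_of_subset_of_card_le (filter_subset _ _) (hk.trans hle))

lemma adj_subset_adj (hw : w ∈ verts E) (hwu : w ∉ adj E u) : adj E u ⊆ adj E w := fun x hx => by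
  obtain ⟨hxu, g, hg, hug, hxg⟩ := mem_adj.1 hx
  exact hA.erase_subset_adj hw hwu hg hug (mem_erase.2 ⟨hxu, hxg⟩)

lemma adj_eq_of_notMem_adj (hu : u ∈ verts E) (hw : w ∈ verts E) (hwu : w ∉ adj E u) :
    adj E u = adj E w :=
  (hA.adj_subset_adj hw hwu).antisymm (hA.adj_subset_adj hu (mem_adj_comm.not.1 hwu))

lemma exists_mem_notMem_adj (he : e ∈ E) (hu : u ∈ verts E) : ∃ x ∈ e, x ∉ adj E u := by
  by_cases hue : u ∈ e
  · exact ⟨u, hue, notMem_adj_self⟩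
  by_contra! h
  have hle : #e ≤ #{f ∈ E | u ∈ f} := by
    refine card_le_card_of_forall_subsingleton (fun x f => x ∈ f) (fun x hx => ?_) ?_
    · obtain ⟨-, f, hf, huf, hxf⟩ := mem_adj.1 (h x hx)
      exact ⟨f, mem_filter.2 ⟨hf, huf⟩, hxf⟩
    · intro f hf x₁ ⟨hx₁e, hx₁f⟩ x₂ ⟨hx₂e, hx₂f⟩
      by_contra hx
      obtain ⟨hf, huf⟩ := mem_filter.1 hf
      exact hue (hA.linear.eq_of_mem_of_mem he hf hx₁e hx₁f hx₂e hx₂f hx ▸ huf)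
  rw [hA.card_eq e he, ← deg, hA.deg_eq u hu] at hle
  omega

theorem exists_proper_coloring : ∃ c : V → Fin (k + 1), Proper E c := by
  obtain rfl | ⟨e, he⟩ := E.eq_empty_or_nonempty
  · exact ⟨fun _ => 0, by simp [Proper]⟩
  have hpick : ∀ u, ∃ x ∈ e, u ∈ verts E → x ∉ adj E u := fun u => by
    by_cases hu : u ∈ verts E
    · obtain ⟨x, hx, hxu⟩ := hA.exists_mem_notMem_adj he hu
      exact ⟨x, hx, fun _ => hxu⟩
    · obtain ⟨x, hx⟩ := card_pos.1 (show 0 < #e by rw [hA.card_eq e he]; omega)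
      exact ⟨x, hx, fun h => absurd h hu⟩
  choose r hre hradj using hpick
  let ι := e.equivFinOfCardEq (hA.card_eq e he)
  refine ⟨fun u => ι ⟨r u, hre u⟩, fun f hf u hu w hw huw hc => ?_⟩
  have hr : r u = r w := congrArg Subtype.val (ι.injective hc)
  have hrv : r u ∈ verts E := mem_verts_of_mem he (hre u)
  have hu' := mem_verts_of_mem hf hu
  have hw' := mem_verts_of_mem hf hw
  have hadj : adj E u = adj E w := by
    rw [hA.adj_eq_of_notMem_adj hu' hrv (hradj u hu'), hr,
      hA.adj_eq_of_notMem_adj hw' (hr ▸ hrv) (hradj w hw')]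
  exact notMem_adj_self (hadj ▸ mem_adj.2 ⟨huw.symm, f, hf, hu, hw⟩)

end IsDualAffinePlane

end HG

theorem stmt7_general {V : Type*} [DecidableEq V] (k : ℕ) (hk : 0 < k)
    (E : Finset (Finset V)) (hlin : HG.Linear E)
    (hE : E.card ≤ k ^ 2) (hsize : ∀ e ∈ E, e.card ≤ k ^ 2)
    (hdeg : ∀ u ∈ HG.verts E, k ≤ HG.deg E u)
    (v : V) (hdv : HG.deg E v = k)
    (hadj : ∀ u ∈ HG.adj E v ∪ {v}, (HG.adj E u).card = k ^ 2) :
    (∃ f : V → Fin (k + 1), HG.Proper E f) ∧ (∃ g : V → Fin (k ^ 2), HG.Proper E g) := by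
  have hadjv : (HG.adj E v).card = k ^ 2 := hadj v (by simp)
  have hk2 : 2 ≤ k := by
    by_contra! hk1
    obtain rfl : k = 1 := by omega
    obtain ⟨u, hu⟩ := Finset.card_pos.1 (show 0 < (HG.adj E v).card by simp [hadjv])
    obtain ⟨huv, e, he, hve, hue⟩ := HG.mem_adj.1 hu
    have := Finset.one_lt_card.2 ⟨u, hue, v, hve, huv⟩
    have := hsize e he
    omega
  obtain ⟨c, hc⟩ := (hlin.isDualAffinePlane hk2 hE hdeg hdv hadjv
    fun u hu => hadj u (Finset.mem_union_left _ hu)).exists_proper_coloring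
  have hle : k + 1 ≤ k ^ 2 := by nlinarith
  exact ⟨⟨c, hc⟩, _, hc.comp (Fin.castLE_injective hle)⟩

theorem stmt7 {V : Type*} [DecidableEq V] (k : ℕ) (hk : 0 < k)
    (E : Finset (Finset V)) (hlin : HG.Linear E)
    (hE : E.card ≤ k ^ 2) (hsize : ∀ e ∈ E, e.card ≤ k ^ 2)
    (hdeg : ∀ u ∈ HG.verts E, k ≤ HG.deg E u)
    (v : V) (hv : v ∈ HG.verts E) (hdv : HG.deg E v = k)
    (hadj : ∀ u ∈ HG.adj E v ∪ {v}, (HG.adj E u).card = k ^ 2) :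
    (∃ f : V → Fin (k + 1), HG.Proper E f) ∧ (∃ g : V → Fin (k ^ 2), HG.Proper E g) :=
  stmt7_general k hk E hlin hE hsize hdeg v hdv hadj
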